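/- Let r be an odd integer with r ≥ 3. Then (x+y)^2 does not divide x^r + y^r + z^r + (x+y+z)^r in F_2[x,y,z]. More precisely, substituting s = x+y one has x^r + y^r + z^r + (x+y+z)^r = s·(x^{r−1} + z^{r−1}) + s^2·P for some polynomial P. -/

import Mathlib

/-!
Put `s = x + y`. In characteristic two `y = x + s` and `x + y + z = z + s`, and for odd `r`
Taylor expansion to first order in `s` gives `(a + s)^r ≡ a^r + a^(r-1) s (mod s^2)`, whence
`x^r + y^r + z^r + (x+y+z)^r ≡ s (x^(r-1) + z^(r-1)) (mod s^2)`. If `s^2` divided the left side,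
`s` would divide `x^(r-1) + z^(r-1)`; but setting `y = x` kills `s` and not `x^(r-1) + z^(r-1)`.
-/

open MvPolynomial

/-- The polynomial `x^j + y^j + z^j + (x+y+z)^j` in `F[x,y,z]`. -/
noncomputable def powSum (F : Type*) [CommRing F] (j : ℕ) : MvPolynomial (Fin 3) F :=
  X 0 ^ j + X 1 ^ j + X 2 ^ j + (X 0 + X 1 + X 2) ^ j

theorem exists_add_pow_eq_add_mul_add_sq_mul {R : Type*} [CommRing R] (a s : R) (n : ℕ) :
    ∃ q, (a + s) ^ n = a ^ n + n * a ^ (n - 1) * s + s ^ 2 * q := by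
  obtain ⟨q, hq⟩ := (Polynomial.X ^ n : Polynomial R).binomExpansion a s
  refine ⟨q, ?_⟩
  simpa [Polynomial.derivative_X_pow, mul_comm q] using hq

theorem CharTwo.exists_add_pow_eq_of_odd {R : Type*} [CommRing R] [CharP R 2] (a s : R) {n : ℕ}
    (hn : Odd n) : ∃ q, (a + s) ^ n = a ^ n + a ^ (n - 1) * s + s ^ 2 * q := by
  obtain ⟨q, hq⟩ := exists_add_pow_eq_add_mul_add_sq_mul a s n
  have hn1 : (n : R) = 1 := by
    obtain ⟨m, rfl⟩ := hn
    simp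
  exact ⟨q, by rw [hq, hn1, one_mul]⟩

theorem powSum_eq_of_odd {F : Type*} [CommRing F] [CharP F 2] {r : ℕ} (hr : Odd r) :
    ∃ P, powSum F r = (X 0 + X 1) * (X 0 ^ (r - 1) + X 2 ^ (r - 1)) + (X 0 + X 1) ^ 2 * P := by
  set s : MvPolynomial (Fin 3) F := X 0 + X 1
  obtain ⟨q₀, hq₀⟩ := CharTwo.exists_add_pow_eq_of_odd (X 0) s hr
  obtain ⟨q₂, hq₂⟩ := CharTwo.exists_add_pow_eq_of_odd (X 2) s hr
  have hy : (X 1 : MvPolynomial (Fin 3) F) = X 0 + s := by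
    rw [← add_assoc, CharTwo.add_self_eq_zero (X 0), zero_add]
  have hxyz : (X 0 + X 1 + X 2 : MvPolynomial (Fin 3) F) = X 2 + s := add_comm _ _
  refine ⟨q₀ + q₂, ?_⟩
  rw [powSum, hxyz, hq₂, hy, hq₀]
  linear_combination (X 0 ^ r + X 2 ^ r) * (CharTwo.two_eq_zero : (2 : MvPolynomial (Fin 3) F) = 0)

section CharTwo

variable {σ F : Type*} [CommRing F] [Nontrivial F] [CharP F 2]

theorem X_pow_add_X_pow_ne_zero {i j : σ} (hij : i ≠ j) {n : ℕ} (hn : n ≠ 0) :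
    (X i ^ n + X j ^ n : MvPolynomial σ F) ≠ 0 := by
  rw [Ne, CharTwo.add_eq_zero, X_pow_eq_monomial, X_pow_eq_monomial,
    monomial_left_inj one_ne_zero, Finsupp.single_left_inj hn]
  exact hij

-- substituting `X j ↦ X i` kills `X i + X j` but fixes `X i ^ n + X k ^ n`
theorem X_add_X_not_dvd_X_pow_add_X_pow {i j k : σ} (hij : i ≠ j) (hkj : k ≠ j) (hik : i ≠ k)
    {n : ℕ} (hn : n ≠ 0) : ¬ (X i + X j : MvPolynomial σ F) ∣ X i ^ n + X k ^ n := by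
  classical
  rintro ⟨u, hu⟩
  have h := congrArg (aeval (Function.update X j (X i) : σ → MvPolynomial σ F)) hu
  simp only [map_add, map_mul, map_pow, aeval_X, Function.update_self,
    Function.update_of_ne hij, Function.update_of_ne hkj, CharTwo.add_self_eq_zero, zero_mul] at h
  exact X_pow_add_X_pow_ne_zero hik hn h

end CharTwo

theorem sq_x_add_y_not_dvd_powSum_odd
    (r : ℕ) (hr : 3 ≤ r) (hodd : Odd r) :
    ¬ (X 0 + X 1 : MvPolynomial (Fin 3) (ZMod 2)) ^ 2 ∣ powSum (ZMod 2) r ∧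
      ∃ P : MvPolynomial (Fin 3) (ZMod 2),
        powSum (ZMod 2) r =
          (X 0 + X 1) * (X 0 ^ (r - 1) + X 2 ^ (r - 1)) + (X 0 + X 1) ^ 2 * P := by
  obtain ⟨P, hP⟩ := powSum_eq_of_odd (F := ZMod 2) hodd
  refine ⟨fun hdvd => ?_, P, hP⟩
  set s : MvPolynomial (Fin 3) (ZMod 2) := X 0 + X 1
  have hs : s ≠ 0 := by
    simpa using X_pow_add_X_pow_ne_zero (F := ZMod 2) (by decide : (0 : Fin 3) ≠ 1) one_ne_zero
  have hsq : s * s ∣ s * (X 0 ^ (r - 1) + X 2 ^ (r - 1)) := by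
    rw [← sq]
    exact (dvd_add_left (dvd_mul_right _ _)).mp (hP ▸ hdvd)
  exact X_add_X_not_dvd_X_pow_add_X_pow (by decide) (by decide) (by decide) (by omega)
    ((mul_dvd_mul_iff_left hs).mp hsq)
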